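/- For every j ∈ {0,…,m}∖{p−1,p}, as z → x_j with Im z > 0, lim D(z)·(z−x_j)^{−β_j} = √(s_{j+1}) · ∏_{k∈{0,…,m}∖{p−1,p}} T_{k,j}^{−β_k}, where for k ≠ j, T_{k,j} = ( √|x_k−x_p| √|x_j−x_{p−1}| + √|x_k−x_{p−1}| √|x_j−x_p| ) / | √|x_k−x_p| √|x_j−x_{p−1}| − √|x_k−x_{p−1}| √|x_j−x_p| |, and T_{j,j} = 4 |x_j−x_{p−1}| |x_j−x_p| / (x_p−x_{p−1}). -/

import Mathlib

/-- The principal complex square root. -/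
noncomputable def csqrt (w : ℂ) : ℂ := w ^ ((1 : ℂ) / 2)

/-- `β_j = (1/(2πi)) log(s_j/s_{j+1})`. -/
noncomputable def betaCoef (s : ℕ → ℝ) (j : ℕ) : ℂ :=
  1 / (2 * ↑Real.pi * Complex.I) * ↑(Real.log (s j / s (j + 1)))

/-- `R_j(z)` for `0 ≤ j ≤ p−2` (so `x_j < a < b`). -/
noncomputable def Rlow (a b xj : ℝ) (z : ℂ) : ℂ :=
  (csqrt (z - ↑a) * ↑(Real.sqrt (b - xj)) - csqrt (z - ↑b) * ↑(Real.sqrt (a - xj))) /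
  (csqrt (z - ↑a) * ↑(Real.sqrt (b - xj)) + csqrt (z - ↑b) * ↑(Real.sqrt (a - xj)))

/-- `R_j(z)` for `p+1 ≤ j ≤ m` (so `a < b < x_j`). -/
noncomputable def Rhigh (a b xj : ℝ) (z : ℂ) : ℂ :=
  (csqrt (z - ↑b) * ↑(Real.sqrt (xj - a)) - csqrt (z - ↑a) * ↑(Real.sqrt (xj - b))) /
  (csqrt (z - ↑b) * ↑(Real.sqrt (xj - a)) + csqrt (z - ↑a) * ↑(Real.sqrt (xj - b)))

/-- The Szegő-type function `D` of the `s_p = 0` analysis: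
`D(z) = ∏_{j=0}^{p−2} R_j(z)^{β_j} · ∏_{j=p+1}^m R_j(z)^{β_j}` for `Im z > 0`,
and the same product with exponents `−β_j` for `Im z < 0`. -/
noncomputable def szegoDGap (m p : ℕ) (x s : ℕ → ℝ) (z : ℂ) : ℂ :=
  if 0 < z.im then
    (∏ j ∈ Finset.range (p - 1), Rlow (x (p - 1)) (x p) (x j) z ^ betaCoef s j) *
      (∏ j ∈ Finset.Icc (p + 1) m, Rhigh (x (p - 1)) (x p) (x j) z ^ betaCoef s j)
  else
    (∏ j ∈ Finset.range (p - 1), Rlow (x (p - 1)) (x p) (x j) z ^ (-betaCoef s j)) *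
      (∏ j ∈ Finset.Icc (p + 1) m, Rhigh (x (p - 1)) (x p) (x j) z ^ (-betaCoef s j))

/-- The constants `T_{k,j}`: for `k ≠ j`,
`T_{k,j} = (√|x_k−x_p| √|x_j−x_{p−1}| + √|x_k−x_{p−1}| √|x_j−x_p|) /
|√|x_k−x_p| √|x_j−x_{p−1}| − √|x_k−x_{p−1}| √|x_j−x_p||`, and
`T_{j,j} = 4|x_j−x_{p−1}||x_j−x_p|/(x_p−x_{p−1})`. -/
noncomputable def Tkj (x : ℕ → ℝ) (p k j : ℕ) : ℝ :=
  if k = j then 4 * |x j - x (p - 1)| * |x j - x p| / (x p - x (p - 1))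
  else
    (Real.sqrt |x k - x p| * Real.sqrt |x j - x (p - 1)| +
        Real.sqrt |x k - x (p - 1)| * Real.sqrt |x j - x p|) /
      abs (Real.sqrt |x k - x p| * Real.sqrt |x j - x (p - 1)| -
        Real.sqrt |x k - x (p - 1)| * Real.sqrt |x j - x p|)

open Complex Filter Topology Finset

lemma log_half_im (w : ℂ) : (Complex.log w * ((1:ℂ)/2)).im = w.arg / 2 := by
  simp [Complex.mul_im, Complex.log_im, Complex.log_re]
  ring

lemma csqrt_mul_self (w : ℂ) : csqrt w * csqrt w = w := by
  rcases eq_or_ne w 0 with rfl | hw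
  · simp [csqrt, Complex.zero_cpow (by norm_num : (1:ℂ)/2 ≠ 0)]
  · have h1 := Complex.neg_pi_lt_arg w
    have h2 := Complex.arg_le_pi w
    have hpi := Real.pi_pos
    have hmul := Complex.cpow_mul (x := w) (y := (1:ℂ)/2) (2 : ℂ)
      (by rw [log_half_im]; linarith) (by rw [log_half_im]; linarith)
    have h3 : w ^ ((1:ℂ)/2 * 2) = w := by norm_num
    rw [h3] at hmul
    have h4 : (csqrt w) ^ ((2:ℕ) : ℂ) = csqrt w * csqrt w := by
      rw [Complex.cpow_natCast]; ring
    rw [← h4, csqrt]; exact_mod_cast hmul.symm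

lemma csqrt_ne_zero {w : ℂ} (hw : w ≠ 0) : csqrt w ≠ 0 := by
  intro h
  apply hw
  rw [← csqrt_mul_self w, h, mul_zero]

lemma csqrt_pos_quadrant {w : ℂ} (hw : 0 < w.im) :
    0 < (csqrt w).re ∧ 0 < (csqrt w).im := by
  have hw0 : w ≠ 0 := by
    intro h; rw [h] at hw; simp at hw
  have harg1 : 0 < w.arg := by
    refine lt_of_le_of_ne (Complex.arg_nonneg_iff.2 hw.le) fun h => ?_
    exact hw.ne' (Complex.arg_eq_zero_iff.1 h.symm).2
  have harg2 : w.arg < Real.pi := Complex.arg_lt_pi_iff.2 (Or.inr hw.ne')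
  have hpi := Real.pi_pos
  rw [csqrt, Complex.cpow_def_of_ne_zero hw0]
  constructor
  · rw [Complex.exp_re, log_half_im]
    have hc : 0 < Real.cos (w.arg / 2) :=
      Real.cos_pos_of_mem_Ioo ⟨by linarith, by linarith⟩
    positivity
  · rw [Complex.exp_im, log_half_im]
    have hs : 0 < Real.sin (w.arg / 2) :=
      Real.sin_pos_of_pos_of_lt_pi (by linarith) (by linarith)
    positivity

lemma im_csqrt_mul_conj_neg {u v : ℂ} (hu : 0 < u.im) (hv : 0 < v.im)
    (hre : v.re < u.re) (him : u.im = v.im) :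
    ((csqrt u) * (starRingEnd ℂ) (csqrt v)).im < 0 := by
  obtain ⟨hur, hui⟩ := csqrt_pos_quadrant hu
  obtain ⟨hvr, hvi⟩ := csqrt_pos_quadrant hv
  set p := csqrt u with hp
  set q := csqrt v with hq
  have hsq : (p * (starRingEnd ℂ) q) * (p * (starRingEnd ℂ) q)
      = u * (starRingEnd ℂ) v := by
    have e1 : (p * (starRingEnd ℂ) q) * (p * (starRingEnd ℂ) q)
        = (p * p) * (starRingEnd ℂ) (q * q) := by rw [map_mul]; ring
    rw [e1, csqrt_mul_self, csqrt_mul_self]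
  have h1 : ((p * (starRingEnd ℂ) q) * (p * (starRingEnd ℂ) q)).im
      = 2 * (p * (starRingEnd ℂ) q).re * (p * (starRingEnd ℂ) q).im := by
    simp [Complex.mul_im, Complex.mul_re]; ring
  have h2 : (u * (starRingEnd ℂ) v).im = u.im * v.re - u.re * v.im := by
    simp [Complex.mul_im, Complex.conj_re, Complex.conj_im]; ring
  have h3 : 0 < (p * (starRingEnd ℂ) q).re := by
    simp only [Complex.mul_re, Complex.conj_re, Complex.conj_im]
    nlinarith
  have h4 : (u * (starRingEnd ℂ) v).im < 0 := by
    rw [h2, him]; nlinarith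
  rw [hsq, h1] at *
  nlinarith

lemma sqrt_eq_exp_half {t : ℝ} (ht : 0 < t) :
    Real.sqrt t = Real.exp (Real.log t / 2) := by
  rw [Real.sqrt_eq_rpow, Real.rpow_def_of_pos ht]
  ring_nf

lemma exp_pi_I_half : Complex.exp (↑Real.pi * Complex.I * ((1:ℂ)/2)) = Complex.I := by
  have : (↑Real.pi * Complex.I * ((1:ℂ)/2)) = ↑(Real.pi/2) * Complex.I := by
    push_cast; ring
  rw [this, Complex.exp_mul_I, ← Complex.ofReal_cos, ← Complex.ofReal_sin,
    Real.cos_pi_div_two, Real.sin_pi_div_two]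
  simp

lemma im_ne_zero_ne_zero {z : ℂ} (hz : 0 < z.im) : z ≠ 0 := by
  intro h; rw [h] at hz; simp at hz

/-- Sided limit of `cpow` at a negative real approached from the upper half plane. -/
lemma tendsto_cpow_neg_upper {α : Type*} {l : Filter α} {f : α → ℂ} {c : ℝ} (hc : c < 0) (β : ℂ)
    (hf : Tendsto f l (𝓝 ↑c)) (him : ∀ᶠ a in l, 0 < (f a).im) :
    Tendsto (fun a => f a ^ β) l
      (𝓝 (Complex.exp ((↑(Real.log (-c)) + ↑Real.pi * Complex.I) * β))) := by
  have hf' : Tendsto f l (𝓝[{z : ℂ | 0 ≤ z.im}] ↑c) :=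
    tendsto_nhdsWithin_iff.2 ⟨hf, him.mono fun a ha => le_of_lt ha⟩
  have hlog := (Complex.tendsto_log_nhdsWithin_im_nonneg_of_re_neg_of_im_zero
      (by simpa using hc) (by simp)).comp hf'
  have habs : Real.log ‖(↑c : ℂ)‖ = Real.log (-c) := by
    rw [Complex.norm_real, Real.norm_eq_abs, abs_of_neg hc]
  rw [habs] at hlog
  have hexp : Tendsto (fun a => Complex.exp (Complex.log (f a) * β)) l
      (𝓝 (Complex.exp ((↑(Real.log (-c)) + ↑Real.pi * Complex.I) * β))) :=
    (Complex.continuous_exp.tendsto _).comp (hlog.mul_const β)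
  apply hexp.congr'
  filter_upwards [him] with a ha
  rw [Complex.cpow_def_of_ne_zero (im_ne_zero_ne_zero ha)]

/-- Sided limit of `cpow` at a negative real approached from the lower half plane. -/
lemma tendsto_cpow_neg_lower {α : Type*} {l : Filter α} {f : α → ℂ} {c : ℝ} (hc : c < 0) (β : ℂ)
    (hf : Tendsto f l (𝓝 ↑c)) (him : ∀ᶠ a in l, (f a).im < 0) :
    Tendsto (fun a => f a ^ β) l
      (𝓝 (Complex.exp ((↑(Real.log (-c)) - ↑Real.pi * Complex.I) * β))) := by
  have hf' : Tendsto f l (𝓝[{z : ℂ | z.im < 0}] ↑c) :=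
    tendsto_nhdsWithin_iff.2 ⟨hf, him⟩
  have hlog := (Complex.tendsto_log_nhdsWithin_im_neg_of_re_neg_of_im_zero
      (by simpa using hc) (by simp)).comp hf'
  have habs : Real.log ‖(↑c : ℂ)‖ = Real.log (-c) := by
    rw [Complex.norm_real, Real.norm_eq_abs, abs_of_neg hc]
  rw [habs] at hlog
  have hexp : Tendsto (fun a => Complex.exp (Complex.log (f a) * β)) l
      (𝓝 (Complex.exp ((↑(Real.log (-c)) - ↑Real.pi * Complex.I) * β))) :=
    (Complex.continuous_exp.tendsto _).comp (hlog.mul_const β)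
  apply hexp.congr'
  filter_upwards [him] with a ha
  have : f a ≠ 0 := by intro h; rw [h] at ha; simp at ha
  rw [Complex.cpow_def_of_ne_zero this]

/-- Limit of `cpow` at a positive real. -/
lemma tendsto_cpow_posreal {α : Type*} {l : Filter α} {f : α → ℂ} {c : ℝ} (hc : 0 < c) (β : ℂ)
    (hf : Tendsto f l (𝓝 ↑c)) :
    Tendsto (fun a => f a ^ β) l (𝓝 (Complex.exp (↑(Real.log c) * β))) := by
  have hmem : (↑c : ℂ) ∈ Complex.slitPlane :=
    Complex.mem_slitPlane_iff.2 (Or.inl (by simpa using hc))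
  have h0 : (↑c : ℂ) ≠ 0 := by exact_mod_cast hc.ne'
  have h1 : Tendsto (fun w : ℂ => w ^ β) (𝓝 ↑c) (𝓝 ((↑c : ℂ) ^ β)) :=
    (continuousAt_cpow_const (b := β) hmem).tendsto
  have := h1.comp hf
  rwa [Complex.cpow_def_of_ne_zero h0, ← Complex.ofReal_log hc.le] at this

/-- Limit of `csqrt (z - c)` from the upper half plane when the branch point is to the right. -/
lemma tendsto_csqrt_sub_of_lt {x c : ℝ} (h : x < c) :
    Tendsto (fun z : ℂ => csqrt (z - ↑c)) (𝓝[{z : ℂ | 0 < z.im}] ↑x)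
      (𝓝 (Complex.I * ↑(Real.sqrt (c - x)))) := by
  have hsub : Tendsto (fun z : ℂ => z - ↑c) (𝓝[{z : ℂ | 0 < z.im}] ↑x)
      (𝓝[{z : ℂ | 0 ≤ z.im}] (↑x - ↑c)) := by
    refine tendsto_nhdsWithin_iff.2 ⟨?_, ?_⟩
    · exact ((continuous_id.sub continuous_const).continuousAt).tendsto.mono_left
        nhdsWithin_le_nhds
    · filter_upwards [eventually_mem_nhdsWithin] with z hz
      simpa using le_of_lt hz
  have hre : ((↑x - ↑c : ℂ)).re < 0 := by simpa using sub_neg.2 h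
  have him : ((↑x - ↑c : ℂ)).im = 0 := by simp
  have hlog := (Complex.tendsto_log_nhdsWithin_im_nonneg_of_re_neg_of_im_zero hre him).comp hsub
  have habs : Real.log ‖(↑x - ↑c : ℂ)‖ = Real.log (c - x) := by
    rw [← Complex.ofReal_sub, Complex.norm_real, Real.norm_eq_abs, abs_of_neg (by linarith : x - c < 0)]
    norm_num
  rw [habs] at hlog
  have hexp : Tendsto (fun z : ℂ => Complex.exp (Complex.log (z - ↑c) * ((1:ℂ)/2)))
      (𝓝[{z : ℂ | 0 < z.im}] ↑x)
      (𝓝 (Complex.exp ((↑(Real.log (c - x)) + ↑Real.pi * Complex.I) * ((1:ℂ)/2)))) :=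
    (Complex.continuous_exp.tendsto _).comp (hlog.mul_const _)
  have heq : Complex.exp ((↑(Real.log (c - x)) + ↑Real.pi * Complex.I) * ((1:ℂ)/2))
      = Complex.I * ↑(Real.sqrt (c - x)) := by
    rw [add_mul, Complex.exp_add, exp_pi_I_half]
    have : (↑(Real.log (c - x)) * ((1:ℂ)/2)) = ↑(Real.log (c - x) / 2) := by push_cast; ring
    rw [this, ← Complex.ofReal_exp, ← sqrt_eq_exp_half (by linarith : (0:ℝ) < c - x)]
    ring
  rw [heq] at hexp
  apply hexp.congr'
  filter_upwards [eventually_mem_nhdsWithin] with z hz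
  have h0 : z - ↑c ≠ 0 := by
    intro h0
    have : z.im = 0 := by
      have h1 := congrArg Complex.im h0
      simp only [Complex.sub_im, Complex.ofReal_im, sub_zero, Complex.zero_im] at h1
      exact h1
    have hz' : 0 < z.im := hz
    linarith
  rw [csqrt, Complex.cpow_def_of_ne_zero h0]

/-- Limit of `csqrt (z - c)` when the branch point is to the left: plain continuity. -/
lemma tendsto_csqrt_sub_of_gt {x c : ℝ} (h : c < x) :
    Tendsto (fun z : ℂ => csqrt (z - ↑c)) (𝓝[{z : ℂ | 0 < z.im}] ↑x)
      (𝓝 ↑(Real.sqrt (x - c))) := by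
  have hre : ((↑x - ↑c : ℂ)).re = x - c := by simp
  have hmem : ((↑x - ↑c : ℂ)) ∈ Complex.slitPlane :=
    Complex.mem_slitPlane_iff.2 (Or.inl (by rw [hre]; linarith))
  have hct : ContinuousAt (fun z : ℂ => csqrt (z - ↑c)) ↑x := by
    have h1 : ContinuousAt (fun w : ℂ => w ^ ((1:ℂ)/2)) (↑x - ↑c) :=
      continuousAt_cpow_const hmem
    have h2 : ContinuousAt (fun z : ℂ => z - ↑c) ↑x :=
      (continuous_id.sub continuous_const).continuousAt
    have h3 : ContinuousAt ((fun w : ℂ => w ^ ((1:ℂ)/2)) ∘ (fun z : ℂ => z - ↑c)) ↑x :=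
      ContinuousAt.comp (g := fun w : ℂ => w ^ ((1:ℂ)/2)) (f := fun z : ℂ => z - ↑c) h1 h2
    simpa [csqrt, Function.comp_def] using h3
  have hval : csqrt (↑x - ↑c) = ↑(Real.sqrt (x - c)) := by
    have h2 : ((1:ℂ)/2) = ((1/2 : ℝ) : ℂ) := by norm_num
    rw [csqrt, ← Complex.ofReal_sub, h2, ← Complex.ofReal_cpow (by linarith : (0:ℝ) ≤ x - c),
      Real.sqrt_eq_rpow]
  have := (hct.continuousWithinAt (s := {z : ℂ | 0 < z.im})).tendsto
  rwa [hval] at this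

section Rfacts

variable {a b t : ℝ}

lemma sub_im_pos {z : ℂ} (hz : 0 < z.im) (c : ℝ) : 0 < (z - ↑c).im := by
  simpa using hz

/-- The denominator of `Rlow`/`Rhigh`-type quotients lies in the open first quadrant. -/
lemma denom_q1 {γ δ : ℝ} (hγ : 0 < γ) (hδ : 0 < δ) {u v : ℝ} {z : ℂ} (hz : 0 < z.im) :
    0 < (csqrt (z - ↑u) * ↑γ + csqrt (z - ↑v) * ↑δ).re ∧
    0 < (csqrt (z - ↑u) * ↑γ + csqrt (z - ↑v) * ↑δ).im := by
  obtain ⟨h1, h2⟩ := csqrt_pos_quadrant (sub_im_pos hz u)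
  obtain ⟨h3, h4⟩ := csqrt_pos_quadrant (sub_im_pos hz v)
  constructor
  · simp only [Complex.add_re, Complex.mul_re, Complex.ofReal_re, Complex.ofReal_im, mul_zero,
      sub_zero]
    positivity
  · simp only [Complex.add_im, Complex.mul_im, Complex.ofReal_re, Complex.ofReal_im, mul_zero,
      zero_mul, add_zero]
    positivity

lemma denom_ne_zero {γ δ : ℝ} (hγ : 0 < γ) (hδ : 0 < δ) {u v : ℝ} {z : ℂ} (hz : 0 < z.im) :
    (csqrt (z - ↑u) * ↑γ + csqrt (z - ↑v) * ↑δ) ≠ 0 := by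
  intro h
  have := (denom_q1 hγ hδ (u := u) (v := v) hz).1
  rw [h] at this
  simp at this

lemma im_Rlow_neg (hab : a < b) (hta : t < a) {z : ℂ} (hz : 0 < z.im) :
    (Rlow a b t z).im < 0 := by
  set γ := Real.sqrt (b - t) with hγdef
  set δ := Real.sqrt (a - t) with hδdef
  have hγ : 0 < γ := Real.sqrt_pos.2 (by linarith)
  have hδ : 0 < δ := Real.sqrt_pos.2 (by linarith)
  set A := csqrt (z - ↑a) with hA
  set B := csqrt (z - ↑b) with hB
  have hkey : (A * (starRingEnd ℂ) B).im < 0 := by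
    apply im_csqrt_mul_conj_neg (sub_im_pos hz a) (sub_im_pos hz b)
    · simp only [Complex.sub_re, Complex.ofReal_re]; linarith
    · simp
  set D := A * ↑γ + B * ↑δ with hD
  set N := A * ↑γ - B * ↑δ with hN
  have hq1 := denom_q1 hγ hδ (u := a) (v := b) hz
  rw [← hA, ← hB, ← hD] at hq1
  have hD0 : D ≠ 0 := by
    intro h; rw [h] at hq1; simp at hq1
  have hns : 0 < Complex.normSq D := Complex.normSq_pos.2 hD0
  have hRlow : Rlow a b t z = N / D := rfl
  rw [hRlow, Complex.div_im, div_sub_div_same]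
  apply div_neg_of_neg_of_pos _ hns
  have hcomb : N.im * D.re - N.re * D.im = 2 * γ * δ * (A * (starRingEnd ℂ) B).im := by
    simp only [hN, hD, Complex.add_re, Complex.add_im, Complex.sub_re, Complex.sub_im,
      Complex.mul_re, Complex.mul_im, Complex.ofReal_re, Complex.ofReal_im, Complex.conj_re,
      Complex.conj_im, mul_zero, zero_mul, sub_zero, add_zero]
    ring
  rw [hcomb]
  have : 0 < 2 * γ * δ := by positivity
  nlinarith

lemma im_Rhigh_pos (hab : a < b) (hbt : b < t) {z : ℂ} (hz : 0 < z.im) :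
    0 < (Rhigh a b t z).im := by
  set γ := Real.sqrt (t - a) with hγdef
  set δ := Real.sqrt (t - b) with hδdef
  have hγ : 0 < γ := Real.sqrt_pos.2 (by linarith)
  have hδ : 0 < δ := Real.sqrt_pos.2 (by linarith)
  set A := csqrt (z - ↑a) with hA
  set B := csqrt (z - ↑b) with hB
  have hkey : (A * (starRingEnd ℂ) B).im < 0 := by
    apply im_csqrt_mul_conj_neg (sub_im_pos hz a) (sub_im_pos hz b)
    · simp only [Complex.sub_re, Complex.ofReal_re]; linarith
    · simp
  have hkey2 : 0 < (B * (starRingEnd ℂ) A).im := by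
    have : (B * (starRingEnd ℂ) A).im = -((A * (starRingEnd ℂ) B).im) := by
      simp only [Complex.mul_im, Complex.conj_re, Complex.conj_im]
      ring
    rw [this]; linarith
  set D := B * ↑γ + A * ↑δ with hD
  set N := B * ↑γ - A * ↑δ with hN
  have hq1 := denom_q1 hγ hδ (u := b) (v := a) hz
  rw [← hA, ← hB, ← hD] at hq1
  have hD0 : D ≠ 0 := by
    intro h; rw [h] at hq1; simp at hq1
  have hns : 0 < Complex.normSq D := Complex.normSq_pos.2 hD0
  have hRhigh : Rhigh a b t z = N / D := rfl
  rw [hRhigh, Complex.div_im, div_sub_div_same]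
  apply div_pos _ hns
  have hcomb : N.im * D.re - N.re * D.im = 2 * γ * δ * (B * (starRingEnd ℂ) A).im := by
    simp only [hN, hD, Complex.add_re, Complex.add_im, Complex.sub_re, Complex.sub_im,
      Complex.mul_re, Complex.mul_im, Complex.ofReal_re, Complex.ofReal_im, Complex.conj_re,
      Complex.conj_im, mul_zero, zero_mul, sub_zero, add_zero]
    ring
  rw [hcomb]
  positivity

end Rfacts

section Rtendsto

variable {a b t x : ℝ}

lemma tendsto_Rlow_of_lt (hab : a < b) (hta : t < a) (hx : x < a) :
    Filter.Tendsto (Rlow a b t) (𝓝[{z : ℂ | 0 < z.im}] ↑x)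
      (𝓝 ↑((Real.sqrt (a - x) * Real.sqrt (b - t) - Real.sqrt (b - x) * Real.sqrt (a - t)) /
          (Real.sqrt (a - x) * Real.sqrt (b - t) + Real.sqrt (b - x) * Real.sqrt (a - t)))) := by
  set p := Real.sqrt (a - x); set q := Real.sqrt (b - x)
  set γ := Real.sqrt (b - t); set δ := Real.sqrt (a - t)
  have hp : 0 < p := Real.sqrt_pos.2 (by linarith)
  have hq : 0 < q := Real.sqrt_pos.2 (by linarith)
  have hγ : 0 < γ := Real.sqrt_pos.2 (by linarith)
  have hδ : 0 < δ := Real.sqrt_pos.2 (by linarith)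
  have hA := tendsto_csqrt_sub_of_lt hx
  have hB := tendsto_csqrt_sub_of_lt (show x < b by linarith)
  have hN := (hA.mul_const (↑γ : ℂ)).sub (hB.mul_const (↑δ : ℂ))
  have hD := (hA.mul_const (↑γ : ℂ)).add (hB.mul_const (↑δ : ℂ))
  have hDen : Complex.I * ↑p * ↑γ + Complex.I * ↑q * ↑δ = Complex.I * ↑(p * γ + q * δ) := by
    push_cast; ring
  have hNum : Complex.I * ↑p * ↑γ - Complex.I * ↑q * ↑δ = Complex.I * ↑(p * γ - q * δ) := by
    push_cast; ring
  have hD0 : Complex.I * ↑p * ↑γ + Complex.I * ↑q * ↑δ ≠ 0 := by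
    rw [hDen]
    apply mul_ne_zero Complex.I_ne_zero
    exact_mod_cast (by positivity : (0:ℝ) < p * γ + q * δ).ne'
  have hDiv := hN.div hD hD0
  have heq : ((Complex.I * ↑p * ↑γ - Complex.I * ↑q * ↑δ) /
      (Complex.I * ↑p * ↑γ + Complex.I * ↑q * ↑δ)) = ↑((p * γ - q * δ) / (p * γ + q * δ)) := by
    rw [hNum, hDen, mul_div_mul_left _ _ Complex.I_ne_zero, Complex.ofReal_div]
  rw [heq] at hDiv
  exact hDiv

lemma tendsto_Rlow_of_gt (hab : a < b) (hta : t < a) (hx : b < x) :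
    Filter.Tendsto (Rlow a b t) (𝓝[{z : ℂ | 0 < z.im}] ↑x)
      (𝓝 ↑((Real.sqrt (x - a) * Real.sqrt (b - t) - Real.sqrt (x - b) * Real.sqrt (a - t)) /
          (Real.sqrt (x - a) * Real.sqrt (b - t) + Real.sqrt (x - b) * Real.sqrt (a - t)))) := by
  set p := Real.sqrt (x - a); set q := Real.sqrt (x - b)
  set γ := Real.sqrt (b - t); set δ := Real.sqrt (a - t)
  have hp : 0 < p := Real.sqrt_pos.2 (by linarith)
  have hγ : 0 < γ := Real.sqrt_pos.2 (by linarith)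
  have hδ : 0 < δ := Real.sqrt_pos.2 (by linarith)
  have hq : (0:ℝ) ≤ q := Real.sqrt_nonneg _
  have hA := tendsto_csqrt_sub_of_gt (show a < x by linarith)
  have hB := tendsto_csqrt_sub_of_gt hx
  have hN := (hA.mul_const (↑γ : ℂ)).sub (hB.mul_const (↑δ : ℂ))
  have hD := (hA.mul_const (↑γ : ℂ)).add (hB.mul_const (↑δ : ℂ))
  have hD0 : (↑p * ↑γ + ↑q * ↑δ : ℂ) ≠ 0 := by
    rw [show (↑p * ↑γ + ↑q * ↑δ : ℂ) = ↑(p * γ + q * δ) by push_cast; ring]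
    exact_mod_cast (by positivity : (0:ℝ) < p * γ + q * δ).ne'
  have hDiv := hN.div hD hD0
  have heq : ((↑p * ↑γ - ↑q * ↑δ) / (↑p * ↑γ + ↑q * ↑δ) : ℂ)
      = ↑((p * γ - q * δ) / (p * γ + q * δ)) := by push_cast; ring
  rw [heq] at hDiv
  exact hDiv

lemma tendsto_Rhigh_of_lt (hab : a < b) (hbt : b < t) (hx : x < a) :
    Filter.Tendsto (Rhigh a b t) (𝓝[{z : ℂ | 0 < z.im}] ↑x)
      (𝓝 ↑((Real.sqrt (b - x) * Real.sqrt (t - a) - Real.sqrt (a - x) * Real.sqrt (t - b)) /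
          (Real.sqrt (b - x) * Real.sqrt (t - a) + Real.sqrt (a - x) * Real.sqrt (t - b)))) := by
  set p := Real.sqrt (b - x); set q := Real.sqrt (a - x)
  set γ := Real.sqrt (t - a); set δ := Real.sqrt (t - b)
  have hp : 0 < p := Real.sqrt_pos.2 (by linarith)
  have hq : 0 < q := Real.sqrt_pos.2 (by linarith)
  have hγ : 0 < γ := Real.sqrt_pos.2 (by linarith)
  have hδ : 0 < δ := Real.sqrt_pos.2 (by linarith)
  have hB := tendsto_csqrt_sub_of_lt (show x < b by linarith)
  have hA := tendsto_csqrt_sub_of_lt hx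
  have hN := (hB.mul_const (↑γ : ℂ)).sub (hA.mul_const (↑δ : ℂ))
  have hD := (hB.mul_const (↑γ : ℂ)).add (hA.mul_const (↑δ : ℂ))
  have hD0 : Complex.I * ↑p * ↑γ + Complex.I * ↑q * ↑δ ≠ 0 := by
    rw [show Complex.I * ↑p * ↑γ + Complex.I * ↑q * ↑δ = Complex.I * ↑(p * γ + q * δ) by
      push_cast; ring]
    apply mul_ne_zero Complex.I_ne_zero
    exact_mod_cast (by positivity : (0:ℝ) < p * γ + q * δ).ne'
  have hDiv := hN.div hD hD0
  have heq : ((Complex.I * ↑p * ↑γ - Complex.I * ↑q * ↑δ) /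
      (Complex.I * ↑p * ↑γ + Complex.I * ↑q * ↑δ)) = ↑((p * γ - q * δ) / (p * γ + q * δ)) := by
    rw [show Complex.I * ↑p * ↑γ - Complex.I * ↑q * ↑δ = Complex.I * ↑(p * γ - q * δ) by
        push_cast; ring,
      show Complex.I * ↑p * ↑γ + Complex.I * ↑q * ↑δ = Complex.I * ↑(p * γ + q * δ) by
        push_cast; ring,
      mul_div_mul_left _ _ Complex.I_ne_zero, Complex.ofReal_div]
  rw [heq] at hDiv
  exact hDiv

lemma tendsto_Rhigh_of_gt (hab : a < b) (hbt : b < t) (hx : b < x) :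
    Filter.Tendsto (Rhigh a b t) (𝓝[{z : ℂ | 0 < z.im}] ↑x)
      (𝓝 ↑((Real.sqrt (x - b) * Real.sqrt (t - a) - Real.sqrt (x - a) * Real.sqrt (t - b)) /
          (Real.sqrt (x - b) * Real.sqrt (t - a) + Real.sqrt (x - a) * Real.sqrt (t - b)))) := by
  set p := Real.sqrt (x - b); set q := Real.sqrt (x - a)
  set γ := Real.sqrt (t - a); set δ := Real.sqrt (t - b)
  have hp : 0 < p := Real.sqrt_pos.2 (by linarith)
  have hq : 0 < q := Real.sqrt_pos.2 (by linarith)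
  have hγ : 0 < γ := Real.sqrt_pos.2 (by linarith)
  have hδ : (0:ℝ) ≤ δ := Real.sqrt_nonneg _
  have hB := tendsto_csqrt_sub_of_gt hx
  have hA := tendsto_csqrt_sub_of_gt (show a < x by linarith)
  have hN := (hB.mul_const (↑γ : ℂ)).sub (hA.mul_const (↑δ : ℂ))
  have hD := (hB.mul_const (↑γ : ℂ)).add (hA.mul_const (↑δ : ℂ))
  have hD0 : (↑p * ↑γ + ↑q * ↑δ : ℂ) ≠ 0 := by
    rw [show (↑p * ↑γ + ↑q * ↑δ : ℂ) = ↑(p * γ + q * δ) by push_cast; ring]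
    exact_mod_cast (by positivity : (0:ℝ) < p * γ + q * δ).ne'
  have hDiv := hN.div hD hD0
  have heq : ((↑p * ↑γ - ↑q * ↑δ) / (↑p * ↑γ + ↑q * ↑δ) : ℂ)
      = ↑((p * γ - q * δ) / (p * γ + q * δ)) := by push_cast; ring
  rw [heq] at hDiv
  exact hDiv

end Rtendsto

section FactorLimits

variable {F : Filter ℂ} {R : ℂ → ℂ} {P Q T : ℝ} {β : ℂ}

/-- Factor limit when the boundary value is negative, approached from below. -/
lemma factor_limit_neg_lower (hP : 0 ≤ P) (hQ : 0 < Q) (hlt : P < Q)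
    (hT : T = (P + Q) / (Q - P))
    (hR : Filter.Tendsto R F (𝓝 ↑((P - Q) / (P + Q))))
    (him : ∀ᶠ z in F, (R z).im < 0) :
    Filter.Tendsto (fun z => R z ^ β) F
      (𝓝 (Complex.exp ((-↑(Real.log T) - ↑Real.pi * Complex.I) * β))) := by
  have hc : (P - Q) / (P + Q) < 0 := div_neg_of_neg_of_pos (by linarith) (by linarith)
  have h := tendsto_cpow_neg_lower hc β hR him
  have hval : Real.log (-((P - Q) / (P + Q))) = -Real.log T := by
    rw [show -((P - Q) / (P + Q)) = T⁻¹ by rw [hT, inv_div]; field_simp; ring, Real.log_inv]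
  rw [hval] at h
  convert h using 3
  push_cast; ring

/-- Factor limit when the boundary value is negative, approached from above. -/
lemma factor_limit_neg_upper (hP : 0 ≤ P) (hQ : 0 < Q) (hlt : P < Q)
    (hT : T = (P + Q) / (Q - P))
    (hR : Filter.Tendsto R F (𝓝 ↑((P - Q) / (P + Q))))
    (him : ∀ᶠ z in F, 0 < (R z).im) :
    Filter.Tendsto (fun z => R z ^ β) F
      (𝓝 (Complex.exp ((-↑(Real.log T) + ↑Real.pi * Complex.I) * β))) := by
  have hc : (P - Q) / (P + Q) < 0 := div_neg_of_neg_of_pos (by linarith) (by linarith)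
  have h := tendsto_cpow_neg_upper hc β hR him
  have hval : Real.log (-((P - Q) / (P + Q))) = -Real.log T := by
    rw [show -((P - Q) / (P + Q)) = T⁻¹ by rw [hT, inv_div]; field_simp; ring, Real.log_inv]
  rw [hval] at h
  convert h using 3
  push_cast; ring

/-- Factor limit when the boundary value is positive. -/
lemma factor_limit_pos (hQ : 0 ≤ Q) (hP : 0 < P) (hlt : Q < P)
    (hT : T = (P + Q) / (P - Q))
    (hR : Filter.Tendsto R F (𝓝 ↑((P - Q) / (P + Q)))) :
    Filter.Tendsto (fun z => R z ^ β) F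
      (𝓝 (Complex.exp (-↑(Real.log T) * β))) := by
  have hc : 0 < (P - Q) / (P + Q) := div_pos (by linarith) (by linarith)
  have h := tendsto_cpow_posreal hc β hR
  have hval : Real.log ((P - Q) / (P + Q)) = -Real.log T := by
    rw [show (P - Q) / (P + Q) = T⁻¹ by rw [hT, inv_div], Real.log_inv]
  rw [hval] at h
  convert h using 3
  push_cast; ring

end FactorLimits

section PhaseAlgebra

/-- `exp(-πi·β_k) = √(s_{k+1})/√(s_k)`. -/
lemma exp_neg_pi_I_beta {s : ℕ → ℝ} {k : ℕ} (hk : 0 < s k) (hk1 : 0 < s (k + 1)) :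
    Complex.exp (-(↑Real.pi * Complex.I) * betaCoef s k)
      = ↑(Real.sqrt (s (k + 1)) / Real.sqrt (s k)) := by
  have hpi : (Real.pi : ℂ) ≠ 0 := by exact_mod_cast Real.pi_ne_zero
  have h1 : -(↑Real.pi * Complex.I) * betaCoef s k
      = ↑(-(Real.log (s k / s (k + 1)) / 2)) := by
    rw [betaCoef]
    push_cast
    field_simp [Complex.I_ne_zero]
  rw [h1, ← Complex.ofReal_exp]
  congr 1
  rw [Real.log_div hk.ne' hk1.ne']
  rw [sqrt_eq_exp_half hk1, sqrt_eq_exp_half hk, ← Real.exp_sub]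
  congr 1
  ring

/-- `exp(πi·β_k) = √(s_k)/√(s_{k+1})`. -/
lemma exp_pi_I_beta {s : ℕ → ℝ} {k : ℕ} (hk : 0 < s k) (hk1 : 0 < s (k + 1)) :
    Complex.exp ((↑Real.pi * Complex.I) * betaCoef s k)
      = ↑(Real.sqrt (s k) / Real.sqrt (s (k + 1))) := by
  have hpi : (Real.pi : ℂ) ≠ 0 := by exact_mod_cast Real.pi_ne_zero
  have h1 : (↑Real.pi * Complex.I) * betaCoef s k
      = ↑(Real.log (s k / s (k + 1)) / 2) := by
    rw [betaCoef]
    push_cast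
    field_simp [Complex.I_ne_zero]
  rw [h1, ← Complex.ofReal_exp]
  congr 1
  rw [Real.log_div hk.ne' hk1.ne']
  rw [sqrt_eq_exp_half hk1, sqrt_eq_exp_half hk, ← Real.exp_sub]
  congr 1
  ring

/-- Telescoping product over `Icc a b`. -/
lemma prod_Icc_telescope {f : ℕ → ℝ} : ∀ b a : ℕ, a ≤ b + 1 →
    (∀ k, a ≤ k → k ≤ b + 1 → f k ≠ 0) →
    ∏ k ∈ Finset.Icc a b, (f (k + 1) / f k) = f (b + 1) / f a := by
  intro b
  induction b with
  | zero =>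
    intro a ha hf
    interval_cases a
    · simp
    · rw [show Finset.Icc 1 0 = ∅ by rfl, Finset.prod_empty,
        div_self (hf 1 le_rfl le_rfl)]
  | succ n ih =>
    intro a ha hf
    rcases Nat.lt_or_ge a (n + 2) with h | h
    · rw [Finset.prod_Icc_succ_top (by omega), ih a (by omega)
        (fun k hk1 hk2 => hf k hk1 (by omega))]
      have h1 : f (n + 1) ≠ 0 := hf (n + 1) (by omega) (by omega)
      rw [div_mul_div_comm, mul_comm (f a) (f (n + 1)), mul_div_mul_left _ _ h1]
    · have ha2 : a = n + 2 := by omega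
      subst ha2
      rw [show Finset.Icc (n + 2) (n + 1) = ∅ by
        apply Finset.Icc_eq_empty; omega, Finset.prod_empty,
        div_self (hf (n + 2) le_rfl (by omega))]

end PhaseAlgebra

section Jfactor

open Complex

/-- The auxiliary function `Q(z) = (γ²-δ²)/D(z)²`. -/
noncomputable def Qfun (u v γ δ : ℝ) (z : ℂ) : ℂ :=
  ((γ : ℂ) ^ 2 - (δ : ℂ) ^ 2) /
    ((csqrt (z - (u : ℂ)) * (γ : ℂ) + csqrt (z - (v : ℂ)) * (δ : ℂ)) ^ 2)

lemma imQ_neg {u v γ δ : ℝ} (hγ : 0 < γ) (hδ : 0 < δ) (hc : 0 < γ ^ 2 - δ ^ 2)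
    {z : ℂ} (hz : 0 < z.im) : (Qfun u v γ δ z).im < 0 := by
  rw [Qfun]
  set D : ℂ := csqrt (z - (↑u : ℂ)) * (↑γ : ℂ) + csqrt (z - (↑v : ℂ)) * (↑δ : ℂ) with hD
  obtain ⟨h1, h2⟩ := denom_q1 hγ hδ (u := u) (v := v) hz
  rw [← hD] at h1 h2
  have hD0 : D ≠ 0 := by intro h; rw [h] at h1; simp at h1
  have hnum : ((γ : ℂ) ^ 2 - (δ : ℂ) ^ 2) = ((γ ^ 2 - δ ^ 2 : ℝ) : ℂ) := by push_cast; ring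
  have hsq : (D ^ 2).im = 2 * D.re * D.im := by
    rw [sq, Complex.mul_im]; ring
  have hns : 0 < Complex.normSq (D ^ 2) := Complex.normSq_pos.2 (pow_ne_zero 2 hD0)
  rw [hnum, Complex.div_im]
  simp only [Complex.ofReal_im, Complex.ofReal_re, zero_mul, zero_div, zero_sub]
  rw [hsq]
  have h3 : 0 < (γ ^ 2 - δ ^ 2) * (2 * D.re * D.im) / Complex.normSq (D ^ 2) := by positivity
  linarith

lemma cpow_split_on_upper {u v γ δ x : ℝ} (hγ : 0 < γ) (hδ : 0 < δ)
    (hc : 0 < γ ^ 2 - δ ^ 2) (hrel : u * γ ^ 2 - v * δ ^ 2 = x * (γ ^ 2 - δ ^ 2)) (β : ℂ)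
    {z : ℂ} (hz : 0 < z.im) :
    ((csqrt (z - ↑u) * ↑γ - csqrt (z - ↑v) * ↑δ) /
      (csqrt (z - ↑u) * ↑γ + csqrt (z - ↑v) * ↑δ)) ^ β * (z - ↑x) ^ (-β)
    = (Qfun u v γ δ z) ^ β := by
  set A : ℂ := csqrt (z - (↑u : ℂ)) with hA
  set B : ℂ := csqrt (z - (↑v : ℂ)) with hB
  set D : ℂ := A * ↑γ + B * ↑δ with hD
  set N : ℂ := A * ↑γ - B * ↑δ with hN
  obtain ⟨h1, h2⟩ := denom_q1 hγ hδ (u := u) (v := v) hz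
  rw [← hA, ← hB, ← hD] at h1 h2
  have hD0 : D ≠ 0 := by intro h; rw [h] at h1; simp at h1
  have hQdef : Qfun u v γ δ z = ((γ : ℂ) ^ 2 - (δ : ℂ) ^ 2) / D ^ 2 := rfl
  have hrel' : ((u : ℂ) * (↑γ) ^ 2 - ↑v * (↑δ) ^ 2) = ↑x * ((↑γ) ^ 2 - (↑δ) ^ 2) := by
    exact_mod_cast congrArg (fun r : ℝ => (r : ℂ)) hrel
  have hND : N * D = ((γ : ℂ) ^ 2 - (δ : ℂ) ^ 2) * (z - ↑x) := by
    have e1 : N * D = (z - ↑u) * (↑γ) ^ 2 - (z - ↑v) * (↑δ) ^ 2 := by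
      have m1 := csqrt_mul_self (z - (↑u : ℂ))
      have m2 := csqrt_mul_self (z - (↑v : ℂ))
      calc N * D = (A * A) * (↑γ) ^ 2 - (B * B) * (↑δ) ^ 2 := by rw [hN, hD]; ring
        _ = (z - ↑u) * (↑γ) ^ 2 - (z - ↑v) * (↑δ) ^ 2 := by rw [hA, hB, m1, m2]
    rw [e1]
    linear_combination -hrel'
  have hRQ : N / D = (z - ↑x) * Qfun u v γ δ z := by
    have e2 : N / D = N * D / D ^ 2 := by
      rw [sq, mul_div_mul_right _ _ hD0]
    rw [e2, hND, hQdef]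
    ring
  have hzx : z - ↑x ≠ 0 := by
    intro h
    have := congrArg Complex.im h
    simp only [Complex.sub_im, Complex.ofReal_im, sub_zero, Complex.zero_im] at this
    linarith
  have hcC : ((γ : ℂ) ^ 2 - (δ : ℂ) ^ 2) ≠ 0 := by
    rw [show ((γ : ℂ) ^ 2 - (δ : ℂ) ^ 2) = ((γ ^ 2 - δ ^ 2 : ℝ) : ℂ) by push_cast; ring]
    exact_mod_cast hc.ne'
  have hQ0 : Qfun u v γ δ z ≠ 0 := by
    rw [hQdef]
    exact div_ne_zero hcC (pow_ne_zero 2 hD0)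
  have himQ : (Qfun u v γ δ z).im < 0 := imQ_neg hγ hδ hc hz
  have harg1 : 0 < (z - ↑x).arg := by
    refine lt_of_le_of_ne (Complex.arg_nonneg_iff.2 ?_) fun h => ?_
    · simp only [Complex.sub_im, Complex.ofReal_im, sub_zero]; linarith
    · have := (Complex.arg_eq_zero_iff.1 h.symm).2
      simp only [Complex.sub_im, Complex.ofReal_im, sub_zero] at this
      linarith
  have harg2 : (z - ↑x).arg ≤ Real.pi := Complex.arg_le_pi _
  have harg3 : (Qfun u v γ δ z).arg < 0 := Complex.arg_neg_iff.2 himQ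
  have harg4 : -Real.pi < (Qfun u v γ δ z).arg := Complex.neg_pi_lt_arg _
  have hlog : Complex.log ((z - ↑x) * Qfun u v γ δ z)
      = Complex.log (z - ↑x) + Complex.log (Qfun u v γ δ z) :=
    Complex.log_mul hzx hQ0 ⟨by linarith, by linarith⟩
  have hsplit : ((z - ↑x) * Qfun u v γ δ z) ^ β = (z - ↑x) ^ β * (Qfun u v γ δ z) ^ β := by
    rw [Complex.cpow_def_of_ne_zero (mul_ne_zero hzx hQ0),
      Complex.cpow_def_of_ne_zero hzx, Complex.cpow_def_of_ne_zero hQ0,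
      hlog, add_mul, Complex.exp_add]
  have hne : (z - ↑x) ^ β ≠ 0 := by
    rw [Complex.cpow_def_of_ne_zero hzx]; exact Complex.exp_ne_zero _
  calc (N / D) ^ β * (z - ↑x) ^ (-β)
      = ((z - ↑x) * Qfun u v γ δ z) ^ β * (z - ↑x) ^ (-β) := by rw [hRQ]
    _ = (Qfun u v γ δ z) ^ β * ((z - ↑x) ^ β * ((z - ↑x) ^ β)⁻¹) := by
        rw [hsplit, Complex.cpow_neg]; ring
    _ = (Qfun u v γ δ z) ^ β := by rw [mul_inv_cancel₀ hne, mul_one]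

lemma tendsto_jfactor_low {a b x : ℝ} (hab : a < b) (hx : x < a) (β : ℂ) :
    Filter.Tendsto (fun z : ℂ => Rlow a b x z ^ β * (z - ↑x) ^ (-β))
      (𝓝[{z : ℂ | 0 < z.im}] ↑x)
      (𝓝 (Complex.exp ((↑(Real.log ((b - a) / (4 * (a - x) * (b - x)))) - ↑Real.pi * Complex.I)
        * β))) := by
  set γ := Real.sqrt (b - x) with hγdef
  set δ := Real.sqrt (a - x) with hδdef
  have hγ : 0 < γ := Real.sqrt_pos.2 (by linarith)
  have hδ : 0 < δ := Real.sqrt_pos.2 (by linarith)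
  have hγ2 : γ ^ 2 = b - x := Real.sq_sqrt (by linarith)
  have hδ2 : δ ^ 2 = a - x := Real.sq_sqrt (by linarith)
  have hc : 0 < γ ^ 2 - δ ^ 2 := by rw [hγ2, hδ2]; linarith
  have hrel : a * γ ^ 2 - b * δ ^ 2 = x * (γ ^ 2 - δ ^ 2) := by
    rw [hγ2, hδ2]; ring
  have hA := tendsto_csqrt_sub_of_lt hx
  have hB := tendsto_csqrt_sub_of_lt (show x < b by linarith)
  have hDt := (hA.mul_const (↑γ : ℂ)).add (hB.mul_const (↑δ : ℂ))
  rw [← hγdef, ← hδdef] at hDt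
  have hD0v : (Complex.I * ↑δ * ↑γ + Complex.I * ↑γ * ↑δ : ℂ) ≠ 0 := by
    rw [show (Complex.I * ↑δ * ↑γ + Complex.I * ↑γ * ↑δ : ℂ)
      = Complex.I * ↑(2 * γ * δ) by push_cast; ring]
    apply mul_ne_zero Complex.I_ne_zero
    exact_mod_cast (by positivity : (0:ℝ) < 2 * γ * δ).ne'
  have hnum : ((γ : ℂ) ^ 2 - (δ : ℂ) ^ 2) = ((γ ^ 2 - δ ^ 2 : ℝ) : ℂ) := by push_cast; ring
  have hQt : Filter.Tendsto (Qfun a b γ δ) (𝓝[{z : ℂ | 0 < z.im}] (↑x : ℂ))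
      (𝓝 (((γ : ℂ) ^ 2 - (δ : ℂ) ^ 2)
        / (Complex.I * ↑δ * ↑γ + Complex.I * ↑γ * ↑δ) ^ 2)) :=
    tendsto_const_nhds.div (hDt.pow 2) (pow_ne_zero 2 hD0v)
  have hval : ((γ : ℂ) ^ 2 - (δ : ℂ) ^ 2)
      / (Complex.I * ↑δ * ↑γ + Complex.I * ↑γ * ↑δ) ^ 2
      = Complex.ofReal (-((γ ^ 2 - δ ^ 2) / (4 * γ ^ 2 * δ ^ 2))) := by
    have hden : (Complex.I * ↑δ * ↑γ + Complex.I * ↑γ * ↑δ : ℂ) ^ 2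
        = -(4 * (↑γ : ℂ) ^ 2 * (↑δ : ℂ) ^ 2) := by
      have e : (Complex.I * ↑δ * ↑γ + Complex.I * ↑γ * ↑δ : ℂ) ^ 2
          = Complex.I ^ 2 * (4 * (↑γ : ℂ) ^ 2 * (↑δ : ℂ) ^ 2) := by ring
      rw [e, Complex.I_sq]; ring
    rw [hden, div_neg, Complex.ofReal_neg]
    congr 1
    push_cast
    ring
  rw [hval] at hQt
  have hcneg : -((γ ^ 2 - δ ^ 2) / (4 * γ ^ 2 * δ ^ 2)) < 0 := by
    have : 0 < (γ ^ 2 - δ ^ 2) / (4 * γ ^ 2 * δ ^ 2) := by positivity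
    linarith
  have himQ : ∀ᶠ z in (𝓝[{z : ℂ | 0 < z.im}] (↑x : ℂ)), (Qfun a b γ δ z).im < 0 := by
    filter_upwards [eventually_mem_nhdsWithin] with z hz
    exact imQ_neg hγ hδ hc hz
  have hfinal := tendsto_cpow_neg_lower hcneg β hQt himQ
  have hlogval : Real.log (- -((γ ^ 2 - δ ^ 2) / (4 * γ ^ 2 * δ ^ 2)))
      = Real.log ((b - a) / (4 * (a - x) * (b - x))) := by
    rw [neg_neg, hγ2, hδ2]
    congr 1
    ring
  rw [hlogval] at hfinal
  apply hfinal.congr'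
  filter_upwards [eventually_mem_nhdsWithin] with z hz
  exact (cpow_split_on_upper hγ hδ hc hrel β hz).symm

lemma tendsto_jfactor_high {a b x : ℝ} (hab : a < b) (hx : b < x) (β : ℂ) :
    Filter.Tendsto (fun z : ℂ => Rhigh a b x z ^ β * (z - ↑x) ^ (-β))
      (𝓝[{z : ℂ | 0 < z.im}] ↑x)
      (𝓝 (Complex.exp (↑(Real.log ((b - a) / (4 * (x - a) * (x - b)))) * β))) := by
  set γ := Real.sqrt (x - a) with hγdef
  set δ := Real.sqrt (x - b) with hδdef
  have hγ : 0 < γ := Real.sqrt_pos.2 (by linarith)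
  have hδ : 0 < δ := Real.sqrt_pos.2 (by linarith)
  have hγ2 : γ ^ 2 = x - a := Real.sq_sqrt (by linarith)
  have hδ2 : δ ^ 2 = x - b := Real.sq_sqrt (by linarith)
  have hc : 0 < γ ^ 2 - δ ^ 2 := by rw [hγ2, hδ2]; linarith
  have hrel : b * γ ^ 2 - a * δ ^ 2 = x * (γ ^ 2 - δ ^ 2) := by
    rw [hγ2, hδ2]; ring
  have hB := tendsto_csqrt_sub_of_gt hx
  have hA := tendsto_csqrt_sub_of_gt (show a < x by linarith)
  have hDt := (hB.mul_const (↑γ : ℂ)).add (hA.mul_const (↑δ : ℂ))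
  rw [← hγdef, ← hδdef] at hDt
  have hD0v : ((↑δ : ℂ) * ↑γ + ↑γ * ↑δ) ≠ 0 := by
    rw [show ((↑δ : ℂ) * ↑γ + ↑γ * ↑δ) = ↑(δ * γ + γ * δ) by push_cast; ring]
    exact_mod_cast (by positivity : (0:ℝ) < δ * γ + γ * δ).ne'
  have hQt : Filter.Tendsto (Qfun b a γ δ) (𝓝[{z : ℂ | 0 < z.im}] (↑x : ℂ))
      (𝓝 (((γ : ℂ) ^ 2 - (δ : ℂ) ^ 2) / ((↑δ : ℂ) * ↑γ + ↑γ * ↑δ) ^ 2)) :=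
    tendsto_const_nhds.div (hDt.pow 2) (pow_ne_zero 2 hD0v)
  have hval : ((γ : ℂ) ^ 2 - (δ : ℂ) ^ 2) / ((↑δ : ℂ) * ↑γ + ↑γ * ↑δ) ^ 2
      = Complex.ofReal ((γ ^ 2 - δ ^ 2) / (4 * γ ^ 2 * δ ^ 2)) := by
    rw [show ((↑δ : ℂ) * ↑γ + ↑γ * ↑δ) = ↑(2 * γ * δ) by push_cast; ring]
    rw [Complex.ofReal_div]
    push_cast
    rw [div_eq_div_iff]
    · ring
    · intro h
      rw [show ((2:ℂ) * ↑γ * ↑δ) ^ 2 = ↑((2 * γ * δ)^2 : ℝ) by push_cast; ring] at h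
      have : ((2 * γ * δ)^2 : ℝ) = 0 := by exact_mod_cast h
      nlinarith
    · intro h
      rw [show ((4:ℂ) * ↑γ ^ 2 * ↑δ ^ 2) = ↑((4 * γ ^ 2 * δ ^ 2 : ℝ)) by push_cast; ring] at h
      have : (4 * γ ^ 2 * δ ^ 2 : ℝ) = 0 := by exact_mod_cast h
      nlinarith
  rw [hval] at hQt
  have hcpos : 0 < (γ ^ 2 - δ ^ 2) / (4 * γ ^ 2 * δ ^ 2) := by positivity
  have hfinal := tendsto_cpow_posreal hcpos β hQt
  have hlogval : Real.log ((γ ^ 2 - δ ^ 2) / (4 * γ ^ 2 * δ ^ 2))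
      = Real.log ((b - a) / (4 * (x - a) * (x - b))) := by
    rw [hγ2, hδ2]
    congr 1
    ring
  rw [hlogval] at hfinal
  apply hfinal.congr'
  filter_upwards [eventually_mem_nhdsWithin] with z hz
  exact (cpow_split_on_upper hγ hδ hc hrel β hz).symm

end Jfactor

section SplitHelpers

lemma ofReal_cpow_neg_beta {T : ℝ} (hT : 0 < T) (β : ℂ) :
    (↑T : ℂ) ^ (-β) = Complex.exp (-↑(Real.log T) * β) := by
  rw [Complex.cpow_def_of_ne_zero (by exact_mod_cast hT.ne' : (↑T:ℂ) ≠ 0),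
    ← Complex.ofReal_log hT.le]
  congr 1; ring

lemma exp_split_neg {T : ℝ} (hT : 0 < T) {s : ℕ → ℝ} {k : ℕ}
    (hk : 0 < s k) (hk1 : 0 < s (k + 1)) :
    Complex.exp ((-↑(Real.log T) - ↑Real.pi * Complex.I) * betaCoef s k)
      = (↑T : ℂ) ^ (-betaCoef s k) * ↑(Real.sqrt (s (k + 1)) / Real.sqrt (s k)) := by
  rw [show ((-↑(Real.log T) - ↑Real.pi * Complex.I) * betaCoef s k)
      = (-↑(Real.log T) * betaCoef s k) + (-(↑Real.pi * Complex.I) * betaCoef s k) by ring,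
    Complex.exp_add, exp_neg_pi_I_beta hk hk1, ofReal_cpow_neg_beta hT]

lemma exp_split_pos {T : ℝ} (hT : 0 < T) {s : ℕ → ℝ} {k : ℕ}
    (hk : 0 < s k) (hk1 : 0 < s (k + 1)) :
    Complex.exp ((-↑(Real.log T) + ↑Real.pi * Complex.I) * betaCoef s k)
      = (↑T : ℂ) ^ (-betaCoef s k) * ↑(Real.sqrt (s k) / Real.sqrt (s (k + 1))) := by
  rw [show ((-↑(Real.log T) + ↑Real.pi * Complex.I) * betaCoef s k)
      = (-↑(Real.log T) * betaCoef s k) + ((↑Real.pi * Complex.I) * betaCoef s k) by ring,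
    Complex.exp_add, exp_pi_I_beta hk hk1, ofReal_cpow_neg_beta hT]

lemma exp_split_none {T : ℝ} (hT : 0 < T) (β : ℂ) :
    Complex.exp (-↑(Real.log T) * β) = (↑T : ℂ) ^ (-β) :=
  (ofReal_cpow_neg_beta hT β).symm

end SplitHelpers

lemma lt_of_sq_lt_sq'' {P Q : ℝ} (h : P ^ 2 < Q ^ 2) (hP : 0 ≤ P) (hQ : 0 ≤ Q) : P < Q := by
  nlinarith

set_option maxHeartbeats 3200000 in
theorem szegoDGap_local_behavior
    (m p : ℕ) (hm : 1 ≤ m) (hp : 1 ≤ p) (hpm : p ≤ m) (x s : ℕ → ℝ)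
    (hx : ∀ j, j < m → x j < x (j + 1))
    (hs : ∀ j, 1 ≤ j → j ≤ m → j ≠ p → 0 < s j)
    (hs0 : s 0 = 1) (hsm : s (m + 1) = 1)
    (j : ℕ) (hj : j ≤ m) (hj1 : j ≠ p - 1) (hj2 : j ≠ p) :
    Filter.Tendsto
      (fun z : ℂ => szegoDGap m p x s z * (z - ↑(x j)) ^ (-betaCoef s j))
      (nhdsWithin (↑(x j)) {z : ℂ | 0 < z.im})
      (nhds ((↑(Real.sqrt (s (j + 1))) : ℂ) *
        ∏ k ∈ (Finset.Icc 0 m).filter (fun k => k ≠ p - 1 ∧ k ≠ p),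
          (↑(Tkj x p k j) : ℂ) ^ (-betaCoef s k))) := by
  classical
  have hmono : ∀ k i : ℕ, i < k → k ≤ m → x i < x k := by
    intro k
    induction k with
    | zero => intro i h _; omega
    | succ n ih =>
      intro i hik hkm
      rcases Nat.lt_or_ge i n with h | h
      · exact lt_trans (ih i h (by omega)) (hx n (by omega))
      · have hin : i = n := by omega
        subst hin
        exact hx i (by omega)
  have hspos : ∀ k, k ≤ m + 1 → k ≠ p → 0 < s k := by
    intro k hk hkp
    rcases Nat.eq_zero_or_pos k with rfl | h1
    · rw [hs0]; norm_num
    · rcases Nat.lt_or_ge k (m + 1) with h2 | h2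
      · exact hs k h1 (by omega) hkp
      · have : k = m + 1 := by omega
        rw [this, hsm]; norm_num
  have hab : x (p - 1) < x p := hmono p (p - 1) (by omega) hpm
  set A := Finset.range (p - 1) with hAdef
  set B := Finset.Icc (p + 1) m with hBdef
  have hdisj : Disjoint A B := by
    rw [Finset.disjoint_left]
    intro k hk hk'
    rw [hAdef, Finset.mem_range] at hk
    rw [hBdef, Finset.mem_Icc] at hk'
    omega
  have hsetEq : (Finset.Icc 0 m).filter (fun k => k ≠ p - 1 ∧ k ≠ p) = A ∪ B := by
    ext k
    rw [Finset.mem_filter, Finset.mem_Icc, Finset.mem_union, hAdef, hBdef,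
      Finset.mem_range, Finset.mem_Icc]
    omega
  have hcase : j < p - 1 ∨ (p < j ∧ j ≤ m) := by omega
  rcases hcase with hjlt | ⟨hjgt, _⟩
  · -- CASE: j below the gap
    have hja : x j < x (p - 1) := hmono (p - 1) j hjlt (by omega)
    set E : ℕ → ℂ := fun k =>
      if k ≤ j then (↑(Real.sqrt (s (k + 1)) / Real.sqrt (s k)) : ℂ) else 1 with hEdef
    set V : ℕ → ℂ := fun k => (↑(Tkj x p k j) : ℂ) ^ (-betaCoef s k) * E k with hVdef
    have hjA : j ∈ A := by rw [hAdef]; exact Finset.mem_range.2 hjlt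
    -- the factors with k ≠ j in the low block
    have hT1 : ∀ k ∈ A.erase j, Filter.Tendsto
        (fun z : ℂ => Rlow (x (p - 1)) (x p) (x k) z ^ betaCoef s k)
        (𝓝[{z : ℂ | 0 < z.im}] ↑(x j)) (𝓝 (V k)) := by
      intro k hk
      obtain ⟨hkj, hkA⟩ := Finset.mem_erase.1 hk
      have hkp : k < p - 1 := by
        have := hkA; rw [hAdef, Finset.mem_range] at this; exact this
      have hka : x k < x (p - 1) := hmono (p - 1) k hkp (by omega)
      have hR := tendsto_Rlow_of_lt hab hka hja
      rw [mul_comm (Real.sqrt (x (p - 1) - x j)) (Real.sqrt (x p - x k)),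
        mul_comm (Real.sqrt (x p - x j)) (Real.sqrt (x (p - 1) - x k))] at hR
      set P := Real.sqrt (x p - x k) * Real.sqrt (x (p - 1) - x j) with hPdef
      set Q := Real.sqrt (x (p - 1) - x k) * Real.sqrt (x p - x j) with hQdef
      have hPnn : 0 ≤ P := by rw [hPdef]; positivity
      have hQnn : 0 ≤ Q := by rw [hQdef]; positivity
      have hPsq : P ^ 2 = (x p - x k) * (x (p - 1) - x j) := by
        rw [hPdef, mul_pow, Real.sq_sqrt (by linarith), Real.sq_sqrt (by linarith)]
      have hQsq : Q ^ 2 = (x (p - 1) - x k) * (x p - x j) := by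
        rw [hQdef, mul_pow, Real.sq_sqrt (by linarith), Real.sq_sqrt (by linarith)]
      have hsk : 0 < s k := hspos k (by omega) (by omega)
      have hsk1 : 0 < s (k + 1) := hspos (k + 1) (by omega) (by omega)
      have habs1 : |x k - x p| = x p - x k := by
        rw [abs_sub_comm]; exact abs_of_pos (by linarith)
      have habs2 : |x j - x (p - 1)| = x (p - 1) - x j := by
        rw [abs_sub_comm]; exact abs_of_pos (by linarith)
      have habs3 : |x k - x (p - 1)| = x (p - 1) - x k := by
        rw [abs_sub_comm]; exact abs_of_pos (by linarith)
      have habs4 : |x j - x p| = x p - x j := by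
        rw [abs_sub_comm]; exact abs_of_pos (by linarith)
      have him : ∀ᶠ z in 𝓝[{z : ℂ | 0 < z.im}] (↑(x j) : ℂ),
          (Rlow (x (p - 1)) (x p) (x k) z).im < 0 := by
        filter_upwards [eventually_mem_nhdsWithin] with z hz
        exact im_Rlow_neg hab hka hz
      rcases Nat.lt_or_ge k j with hkj' | hkj' 
      · -- k < j : negative boundary value
        have hxkj : x k < x j := hmono j k hkj' (by omega)
        have hsqlt : P ^ 2 < Q ^ 2 := by rw [hPsq, hQsq]; nlinarith
        have hPQ : P < Q := lt_of_sq_lt_sq'' hsqlt hPnn hQnn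
        have hQpos : 0 < Q := lt_of_le_of_lt hPnn hPQ
        have hT : Tkj x p k j = (P + Q) / (Q - P) := by
          rw [Tkj, if_neg hkj, habs1, habs2, habs3, habs4, ← hPdef, ← hQdef,
            abs_of_neg (by linarith : P - Q < 0), neg_sub]
        have hlim := factor_limit_neg_lower (β := betaCoef s k) hPnn hQpos hPQ hT hR him
        have hTpos : 0 < Tkj x p k j := by
          rw [hT]; apply div_pos (by linarith) (by linarith)
        rw [exp_split_neg hTpos hsk hsk1] at hlim
        have hVk : V k = (↑(Tkj x p k j) : ℂ) ^ (-betaCoef s k)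
            * ↑(Real.sqrt (s (k + 1)) / Real.sqrt (s k)) := by
          rw [hVdef]; simp only; rw [hEdef]; simp only
          rw [if_pos (le_of_lt hkj')]
        rw [hVk]
        exact hlim
      · -- j < k
        have hkj2 : j < k := by omega
        have hxkj : x j < x k := hmono k j hkj2 (by omega)
        have hsqlt : Q ^ 2 < P ^ 2 := by rw [hPsq, hQsq]; nlinarith
        have hQP : Q < P := lt_of_sq_lt_sq'' hsqlt hQnn hPnn
        have hPpos : 0 < P := lt_of_le_of_lt hQnn hQP
        have hT : Tkj x p k j = (P + Q) / (P - Q) := by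
          rw [Tkj, if_neg hkj, habs1, habs2, habs3, habs4, ← hPdef, ← hQdef,
            abs_of_pos (by linarith : 0 < P - Q)]
        have hlim := factor_limit_pos (β := betaCoef s k) hQnn hPpos hQP hT hR
        have hTpos : 0 < Tkj x p k j := by
          rw [hT]; apply div_pos (by linarith) (by linarith)
        rw [exp_split_none hTpos] at hlim
        have hVk : V k = (↑(Tkj x p k j) : ℂ) ^ (-betaCoef s k) := by
          rw [hVdef]; simp only; rw [hEdef]; simp only
          rw [if_neg (by omega : ¬ k ≤ j), mul_one]
        rw [hVk]
        exact hlim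
    -- the j factor
    have hsj : 0 < s j := hspos j (by omega) (by omega)
    have hsj1 : 0 < s (j + 1) := hspos (j + 1) (by omega) (by omega)
    have hT2 : Filter.Tendsto
        (fun z : ℂ => Rlow (x (p - 1)) (x p) (x j) z ^ betaCoef s j
          * (z - ↑(x j)) ^ (-betaCoef s j))
        (𝓝[{z : ℂ | 0 < z.im}] ↑(x j)) (𝓝 (V j)) := by
      have h := tendsto_jfactor_low hab hja (betaCoef s j)
      have habs2 : |x j - x (p - 1)| = x (p - 1) - x j := by
        rw [abs_sub_comm]; exact abs_of_pos (by linarith)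
      have habs4 : |x j - x p| = x p - x j := by
        rw [abs_sub_comm]; exact abs_of_pos (by linarith)
      have hTjj : Tkj x p j j
          = 4 * (x (p - 1) - x j) * (x p - x j) / (x p - x (p - 1)) := by
        rw [Tkj, if_pos rfl, habs2, habs4]
      have hTpos : 0 < Tkj x p j j := by
        rw [hTjj]
        apply div_pos (by nlinarith) (by linarith)
      have hlogrel : Real.log ((x p - x (p - 1)) / (4 * (x (p - 1) - x j) * (x p - x j)))
          = -Real.log (Tkj x p j j) := by
        rw [hTjj, show (x p - x (p - 1)) / (4 * (x (p - 1) - x j) * (x p - x j))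
          = (4 * (x (p - 1) - x j) * (x p - x j) / (x p - x (p - 1)))⁻¹ from
            (inv_div _ _).symm, Real.log_inv]
      rw [hlogrel, Complex.ofReal_neg] at h
      rw [exp_split_neg hTpos hsj hsj1] at h
      have hVj : V j = (↑(Tkj x p j j) : ℂ) ^ (-betaCoef s j)
          * ↑(Real.sqrt (s (j + 1)) / Real.sqrt (s j)) := by
        rw [hVdef]; simp only; rw [hEdef]; simp only
        rw [if_pos (le_refl j)]
      rw [hVj]
      exact h
    -- the high factors
    have hT3 : ∀ k ∈ B, Filter.Tendsto
        (fun z : ℂ => Rhigh (x (p - 1)) (x p) (x k) z ^ betaCoef s k)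
        (𝓝[{z : ℂ | 0 < z.im}] ↑(x j)) (𝓝 (V k)) := by
      intro k hk
      rw [hBdef, Finset.mem_Icc] at hk
      have hbk : x p < x k := hmono k p (by omega) (by omega)
      have hR := tendsto_Rhigh_of_lt hab hbk hja
      rw [mul_comm (Real.sqrt (x p - x j)) (Real.sqrt (x k - x (p - 1))),
        mul_comm (Real.sqrt (x (p - 1) - x j)) (Real.sqrt (x k - x p))] at hR
      set P := Real.sqrt (x k - x (p - 1)) * Real.sqrt (x p - x j) with hPdef
      set Q := Real.sqrt (x k - x p) * Real.sqrt (x (p - 1) - x j) with hQdef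
      have hPnn : 0 ≤ P := by rw [hPdef]; positivity
      have hQnn : 0 ≤ Q := by rw [hQdef]; positivity
      have hPsq : P ^ 2 = (x k - x (p - 1)) * (x p - x j) := by
        rw [hPdef, mul_pow, Real.sq_sqrt (by linarith), Real.sq_sqrt (by linarith)]
      have hQsq : Q ^ 2 = (x k - x p) * (x (p - 1) - x j) := by
        rw [hQdef, mul_pow, Real.sq_sqrt (by linarith), Real.sq_sqrt (by linarith)]
      have hsk : 0 < s k := hspos k (by omega) (by omega)
      have hsk1 : 0 < s (k + 1) := hspos (k + 1) (by omega) (by omega)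
      have hxkj : x j < x k := by linarith
      have hsqlt : Q ^ 2 < P ^ 2 := by rw [hPsq, hQsq]; nlinarith
      have hQP : Q < P := lt_of_sq_lt_sq'' hsqlt hQnn hPnn
      have hPpos : 0 < P := lt_of_le_of_lt hQnn hQP
      have hkj : k ≠ j := by omega
      have habs1 : |x k - x p| = x k - x p := abs_of_pos (by linarith)
      have habs2 : |x j - x (p - 1)| = x (p - 1) - x j := by
        rw [abs_sub_comm]; exact abs_of_pos (by linarith)
      have habs3 : |x k - x (p - 1)| = x k - x (p - 1) := abs_of_pos (by linarith)
      have habs4 : |x j - x p| = x p - x j := by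
        rw [abs_sub_comm]; exact abs_of_pos (by linarith)
      have hT : Tkj x p k j = (P + Q) / (P - Q) := by
        rw [Tkj, if_neg hkj, habs1, habs2, habs3, habs4, ← hPdef, ← hQdef,
          abs_of_neg (by linarith : Q - P < 0), neg_sub]
        rw [add_comm Q P]
      have hlim := factor_limit_pos (β := betaCoef s k) hQnn hPpos hQP hT hR
      have hTpos : 0 < Tkj x p k j := by
        rw [hT]; apply div_pos (by linarith) (by linarith)
      rw [exp_split_none hTpos] at hlim
      have hVk : V k = (↑(Tkj x p k j) : ℂ) ^ (-betaCoef s k) := by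
        rw [hVdef]; simp only; rw [hEdef]; simp only
        rw [if_neg (by omega : ¬ k ≤ j), mul_one]
      rw [hVk]
      exact hlim
    -- assemble
    have hP1 := tendsto_finset_prod (A.erase j) hT1
    have hP2 := tendsto_finset_prod B hT3
    have hBig := (hP1.mul hT2).mul hP2
    have hEq : (fun z : ℂ => szegoDGap m p x s z * (z - ↑(x j)) ^ (-betaCoef s j))
        =ᶠ[𝓝[{z : ℂ | 0 < z.im}] (↑(x j) : ℂ)]
        (fun z : ℂ =>
          ((∏ k ∈ A.erase j, Rlow (x (p - 1)) (x p) (x k) z ^ betaCoef s k) *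
            (Rlow (x (p - 1)) (x p) (x j) z ^ betaCoef s j
              * (z - ↑(x j)) ^ (-betaCoef s j))) *
          ∏ k ∈ B, Rhigh (x (p - 1)) (x p) (x k) z ^ betaCoef s k) := by
      filter_upwards [eventually_mem_nhdsWithin] with z hz
      have hz' : 0 < z.im := hz
      rw [szegoDGap, if_pos hz', ← Finset.prod_erase_mul A
        (fun k => Rlow (x (p - 1)) (x p) (x k) z ^ betaCoef s k) hjA]
      ring
    have hVal : ((∏ k ∈ A.erase j, V k) * V j) * ∏ k ∈ B, V k
        = (↑(Real.sqrt (s (j + 1))) : ℂ) *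
          ∏ k ∈ (Finset.Icc 0 m).filter (fun k => k ≠ p - 1 ∧ k ≠ p),
            (↑(Tkj x p k j) : ℂ) ^ (-betaCoef s k) := by
      rw [Finset.prod_erase_mul A V hjA, ← Finset.prod_union hdisj, hsetEq, hVdef]
      simp only
      rw [Finset.prod_mul_distrib]
      have hEprod : ∏ k ∈ A ∪ B, E k = (↑(Real.sqrt (s (j + 1))) : ℂ) := by
        have hsub : Finset.Icc 0 j ⊆ A ∪ B := by
          intro k hk
          rw [Finset.mem_Icc] at hk
          rw [Finset.mem_union, hAdef, Finset.mem_range]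
          left; omega
        rw [← Finset.prod_subset hsub (fun k hk hknot => by
          rw [hEdef]; simp only
          rw [if_neg]
          intro hkle
          exact hknot (Finset.mem_Icc.2 ⟨Nat.zero_le k, hkle⟩))]
        have hEval : ∏ k ∈ Finset.Icc 0 j, E k
            = ∏ k ∈ Finset.Icc 0 j, (↑(Real.sqrt (s (k + 1)) / Real.sqrt (s k)) : ℂ) := by
          apply Finset.prod_congr rfl
          intro k hk
          rw [Finset.mem_Icc] at hk
          rw [hEdef]; simp only
          rw [if_pos hk.2]
        rw [hEval, ← Complex.ofReal_prod]
        have htel : ∏ k ∈ Finset.Icc 0 j, (Real.sqrt (s (k + 1)) / Real.sqrt (s k))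
            = Real.sqrt (s (j + 1)) / Real.sqrt (s 0) := by
          apply prod_Icc_telescope (f := fun k => Real.sqrt (s k)) j 0 (by omega)
          intro k hk1 hk2
          have : 0 < s k := hspos k (by omega) (by omega)
          exact (Real.sqrt_pos.2 this).ne'
        rw [htel, hs0, Real.sqrt_one, div_one]
      rw [hEprod]
      ring
    rw [hVal] at hBig
    exact Filter.Tendsto.congr' hEq.symm hBig
  · -- CASE: j above the gap
    have hjb : x p < x j := hmono j p hjgt hj
    set E : ℕ → ℂ := fun k =>
      if j < k then (↑(Real.sqrt (s k) / Real.sqrt (s (k + 1))) : ℂ) else 1 with hEdef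
    set V : ℕ → ℂ := fun k => (↑(Tkj x p k j) : ℂ) ^ (-betaCoef s k) * E k with hVdef
    have hjB : j ∈ B := by rw [hBdef]; exact Finset.mem_Icc.2 ⟨by omega, hj⟩
    -- the low factors, all positive boundary values
    have hT1 : ∀ k ∈ A, Filter.Tendsto
        (fun z : ℂ => Rlow (x (p - 1)) (x p) (x k) z ^ betaCoef s k)
        (𝓝[{z : ℂ | 0 < z.im}] ↑(x j)) (𝓝 (V k)) := by
      intro k hk
      have hkp : k < p - 1 := by
        have := hk; rw [hAdef, Finset.mem_range] at this; exact this
      have hka : x k < x (p - 1) := hmono (p - 1) k hkp (by omega)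
      have hR := tendsto_Rlow_of_gt hab hka hjb
      rw [mul_comm (Real.sqrt (x j - x (p - 1))) (Real.sqrt (x p - x k)),
        mul_comm (Real.sqrt (x j - x p)) (Real.sqrt (x (p - 1) - x k))] at hR
      set P := Real.sqrt (x p - x k) * Real.sqrt (x j - x (p - 1)) with hPdef
      set Q := Real.sqrt (x (p - 1) - x k) * Real.sqrt (x j - x p) with hQdef
      have hPnn : 0 ≤ P := by rw [hPdef]; positivity
      have hQnn : 0 ≤ Q := by rw [hQdef]; positivity
      have hPsq : P ^ 2 = (x p - x k) * (x j - x (p - 1)) := by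
        rw [hPdef, mul_pow, Real.sq_sqrt (by linarith), Real.sq_sqrt (by linarith)]
      have hQsq : Q ^ 2 = (x (p - 1) - x k) * (x j - x p) := by
        rw [hQdef, mul_pow, Real.sq_sqrt (by linarith), Real.sq_sqrt (by linarith)]
      have hxkj : x k < x j := by linarith
      have hkj : k ≠ j := by omega
      have hsqlt : Q ^ 2 < P ^ 2 := by rw [hPsq, hQsq]; nlinarith
      have hQP : Q < P := lt_of_sq_lt_sq'' hsqlt hQnn hPnn
      have hPpos : 0 < P := lt_of_le_of_lt hQnn hQP
      have habs1 : |x k - x p| = x p - x k := by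
        rw [abs_sub_comm]; exact abs_of_pos (by linarith)
      have habs2 : |x j - x (p - 1)| = x j - x (p - 1) := abs_of_pos (by linarith)
      have habs3 : |x k - x (p - 1)| = x (p - 1) - x k := by
        rw [abs_sub_comm]; exact abs_of_pos (by linarith)
      have habs4 : |x j - x p| = x j - x p := abs_of_pos (by linarith)
      have hT : Tkj x p k j = (P + Q) / (P - Q) := by
        rw [Tkj, if_neg hkj, habs1, habs2, habs3, habs4, ← hPdef, ← hQdef,
          abs_of_pos (by linarith : 0 < P - Q)]
      have hlim := factor_limit_pos (β := betaCoef s k) hQnn hPpos hQP hT hR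
      have hTpos : 0 < Tkj x p k j := by
        rw [hT]; apply div_pos (by linarith) (by linarith)
      rw [exp_split_none hTpos] at hlim
      have hVk : V k = (↑(Tkj x p k j) : ℂ) ^ (-betaCoef s k) := by
        rw [hVdef]; simp only; rw [hEdef]; simp only
        rw [if_neg (by omega : ¬ j < k), mul_one]
      rw [hVk]
      exact hlim
    -- the j factor
    have hT2 : Filter.Tendsto
        (fun z : ℂ => Rhigh (x (p - 1)) (x p) (x j) z ^ betaCoef s j
          * (z - ↑(x j)) ^ (-betaCoef s j))
        (𝓝[{z : ℂ | 0 < z.im}] ↑(x j)) (𝓝 (V j)) := by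
      have h := tendsto_jfactor_high hab hjb (betaCoef s j)
      have habs2 : |x j - x (p - 1)| = x j - x (p - 1) := abs_of_pos (by linarith)
      have habs4 : |x j - x p| = x j - x p := abs_of_pos (by linarith)
      have hTjj : Tkj x p j j
          = 4 * (x j - x (p - 1)) * (x j - x p) / (x p - x (p - 1)) := by
        rw [Tkj, if_pos rfl, habs2, habs4]
      have hTpos : 0 < Tkj x p j j := by
        rw [hTjj]
        apply div_pos (by nlinarith) (by linarith)
      have hlogrel : Real.log ((x p - x (p - 1)) / (4 * (x j - x (p - 1)) * (x j - x p)))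
          = -Real.log (Tkj x p j j) := by
        rw [hTjj, show (x p - x (p - 1)) / (4 * (x j - x (p - 1)) * (x j - x p))
          = (4 * (x j - x (p - 1)) * (x j - x p) / (x p - x (p - 1)))⁻¹ from
            (inv_div _ _).symm, Real.log_inv]
      rw [hlogrel, Complex.ofReal_neg] at h
      rw [exp_split_none hTpos] at h
      have hVj : V j = (↑(Tkj x p j j) : ℂ) ^ (-betaCoef s j) := by
        rw [hVdef]; simp only; rw [hEdef]; simp only
        rw [if_neg (lt_irrefl j), mul_one]
      rw [hVj]
      exact h
    -- the high factors with k ≠ j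
    have hT3 : ∀ k ∈ B.erase j, Filter.Tendsto
        (fun z : ℂ => Rhigh (x (p - 1)) (x p) (x k) z ^ betaCoef s k)
        (𝓝[{z : ℂ | 0 < z.im}] ↑(x j)) (𝓝 (V k)) := by
      intro k hk
      obtain ⟨hkj, hkB⟩ := Finset.mem_erase.1 hk
      have hkB' : p + 1 ≤ k ∧ k ≤ m := by
        have := hkB; rw [hBdef, Finset.mem_Icc] at this; exact this
      have hbk : x p < x k := hmono k p (by omega) (by omega)
      have hR := tendsto_Rhigh_of_gt hab hbk hjb
      rw [mul_comm (Real.sqrt (x j - x p)) (Real.sqrt (x k - x (p - 1))),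
        mul_comm (Real.sqrt (x j - x (p - 1))) (Real.sqrt (x k - x p))] at hR
      set P := Real.sqrt (x k - x (p - 1)) * Real.sqrt (x j - x p) with hPdef
      set Q := Real.sqrt (x k - x p) * Real.sqrt (x j - x (p - 1)) with hQdef
      have hPnn : 0 ≤ P := by rw [hPdef]; positivity
      have hQnn : 0 ≤ Q := by rw [hQdef]; positivity
      have hPsq : P ^ 2 = (x k - x (p - 1)) * (x j - x p) := by
        rw [hPdef, mul_pow, Real.sq_sqrt (by linarith), Real.sq_sqrt (by linarith)]
      have hQsq : Q ^ 2 = (x k - x p) * (x j - x (p - 1)) := by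
        rw [hQdef, mul_pow, Real.sq_sqrt (by linarith), Real.sq_sqrt (by linarith)]
      have hsk : 0 < s k := hspos k (by omega) (by omega)
      have hsk1 : 0 < s (k + 1) := hspos (k + 1) (by omega) (by omega)
      have habs1 : |x k - x p| = x k - x p := abs_of_pos (by linarith)
      have habs2 : |x j - x (p - 1)| = x j - x (p - 1) := abs_of_pos (by linarith)
      have habs3 : |x k - x (p - 1)| = x k - x (p - 1) := abs_of_pos (by linarith)
      have habs4 : |x j - x p| = x j - x p := abs_of_pos (by linarith)
      have him : ∀ᶠ z in 𝓝[{z : ℂ | 0 < z.im}] (↑(x j) : ℂ),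
          0 < (Rhigh (x (p - 1)) (x p) (x k) z).im := by
        filter_upwards [eventually_mem_nhdsWithin] with z hz
        exact im_Rhigh_pos hab hbk hz
      rcases Nat.lt_or_ge j k with hkj' | hkj'
      · -- j < k : negative boundary value, approached from above
        have hxkj : x j < x k := hmono k j hkj' (by omega)
        have hsqlt : P ^ 2 < Q ^ 2 := by rw [hPsq, hQsq]; nlinarith
        have hPQ : P < Q := lt_of_sq_lt_sq'' hsqlt hPnn hQnn
        have hQpos : 0 < Q := lt_of_le_of_lt hPnn hPQ
        have hT : Tkj x p k j = (P + Q) / (Q - P) := by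
          rw [Tkj, if_neg hkj, habs1, habs2, habs3, habs4, ← hPdef, ← hQdef,
            abs_of_pos (by linarith : 0 < Q - P), add_comm Q P]
        have hlim := factor_limit_neg_upper (β := betaCoef s k) hPnn hQpos hPQ hT hR him
        have hTpos : 0 < Tkj x p k j := by
          rw [hT]; apply div_pos (by linarith) (by linarith)
        rw [exp_split_pos hTpos hsk hsk1] at hlim
        have hVk : V k = (↑(Tkj x p k j) : ℂ) ^ (-betaCoef s k)
            * ↑(Real.sqrt (s k) / Real.sqrt (s (k + 1))) := by
          rw [hVdef]; simp only; rw [hEdef]; simp only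
          rw [if_pos hkj']
        rw [hVk]
        exact hlim
      · -- k < j
        have hkj2 : k < j := by omega
        have hxkj : x k < x j := hmono j k hkj2 (by omega)
        have hsqlt : Q ^ 2 < P ^ 2 := by rw [hPsq, hQsq]; nlinarith
        have hQP : Q < P := lt_of_sq_lt_sq'' hsqlt hQnn hPnn
        have hPpos : 0 < P := lt_of_le_of_lt hQnn hQP
        have hT : Tkj x p k j = (P + Q) / (P - Q) := by
          rw [Tkj, if_neg hkj, habs1, habs2, habs3, habs4, ← hPdef, ← hQdef,
            abs_of_neg (by linarith : Q - P < 0), neg_sub, add_comm Q P]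
        have hlim := factor_limit_pos (β := betaCoef s k) hQnn hPpos hQP hT hR
        have hTpos : 0 < Tkj x p k j := by
          rw [hT]; apply div_pos (by linarith) (by linarith)
        rw [exp_split_none hTpos] at hlim
        have hVk : V k = (↑(Tkj x p k j) : ℂ) ^ (-betaCoef s k) := by
          rw [hVdef]; simp only; rw [hEdef]; simp only
          rw [if_neg (by omega : ¬ j < k), mul_one]
        rw [hVk]
        exact hlim
    -- assemble
    have hP1 := tendsto_finset_prod A hT1
    have hP2 := tendsto_finset_prod (B.erase j) hT3
    have hBig := hP1.mul (hP2.mul hT2)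
    have hEq : (fun z : ℂ => szegoDGap m p x s z * (z - ↑(x j)) ^ (-betaCoef s j))
        =ᶠ[𝓝[{z : ℂ | 0 < z.im}] (↑(x j) : ℂ)]
        (fun z : ℂ =>
          (∏ k ∈ A, Rlow (x (p - 1)) (x p) (x k) z ^ betaCoef s k) *
          ((∏ k ∈ B.erase j, Rhigh (x (p - 1)) (x p) (x k) z ^ betaCoef s k) *
            (Rhigh (x (p - 1)) (x p) (x j) z ^ betaCoef s j
              * (z - ↑(x j)) ^ (-betaCoef s j)))) := by
      filter_upwards [eventually_mem_nhdsWithin] with z hz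
      have hz' : 0 < z.im := hz
      rw [szegoDGap, if_pos hz', ← Finset.prod_erase_mul B
        (fun k => Rhigh (x (p - 1)) (x p) (x k) z ^ betaCoef s k) hjB]
      ring
    have hVal : (∏ k ∈ A, V k) * ((∏ k ∈ B.erase j, V k) * V j)
        = (↑(Real.sqrt (s (j + 1))) : ℂ) *
          ∏ k ∈ (Finset.Icc 0 m).filter (fun k => k ≠ p - 1 ∧ k ≠ p),
            (↑(Tkj x p k j) : ℂ) ^ (-betaCoef s k) := by
      rw [Finset.prod_erase_mul B V hjB, ← Finset.prod_union hdisj, hsetEq, hVdef]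
      simp only
      rw [Finset.prod_mul_distrib]
      have hEprod : ∏ k ∈ A ∪ B, E k = (↑(Real.sqrt (s (j + 1))) : ℂ) := by
        have hsub : Finset.Icc (j + 1) m ⊆ A ∪ B := by
          intro k hk
          rw [Finset.mem_Icc] at hk
          rw [Finset.mem_union, hBdef, Finset.mem_Icc]
          right; omega
        rw [← Finset.prod_subset hsub (fun k hk hknot => by
          rw [Finset.mem_union, hAdef, hBdef, Finset.mem_range, Finset.mem_Icc] at hk
          rw [Finset.mem_Icc] at hknot
          rw [hEdef]; simp only
          rw [if_neg (by omega : ¬ j < k)])]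
        have hEval : ∏ k ∈ Finset.Icc (j + 1) m, E k
            = ∏ k ∈ Finset.Icc (j + 1) m,
              (↑(Real.sqrt (s k) / Real.sqrt (s (k + 1))) : ℂ) := by
          apply Finset.prod_congr rfl
          intro k hk
          rw [Finset.mem_Icc] at hk
          rw [hEdef]; simp only
          rw [if_pos (by omega : j < k)]
        rw [hEval, ← Complex.ofReal_prod]
        have hstep : ∏ k ∈ Finset.Icc (j + 1) m, (Real.sqrt (s k) / Real.sqrt (s (k + 1)))
            = ∏ k ∈ Finset.Icc (j + 1) m,
              ((fun i => (Real.sqrt (s i))⁻¹) (k + 1) / (fun i => (Real.sqrt (s i))⁻¹) k) := by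
          apply Finset.prod_congr rfl
          intro k hk
          rw [Finset.mem_Icc] at hk
          have h1 : Real.sqrt (s k) ≠ 0 :=
            (Real.sqrt_pos.2 (hspos k (by omega) (by omega))).ne'
          have h2 : Real.sqrt (s (k + 1)) ≠ 0 :=
            (Real.sqrt_pos.2 (hspos (k + 1) (by omega) (by omega))).ne'
          simp only
          rw [div_eq_div_iff h2 (inv_ne_zero h1), mul_inv_cancel₀ h1, inv_mul_cancel₀ h2]
        have hlast : ((fun i => (Real.sqrt (s i))⁻¹) (m + 1))
            / ((fun i => (Real.sqrt (s i))⁻¹) (j + 1)) = Real.sqrt (s (j + 1)) := by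
          simp only
          rw [hsm, Real.sqrt_one, inv_one, one_div, inv_inv]
        rw [hstep, prod_Icc_telescope (f := fun i => (Real.sqrt (s i))⁻¹) m (j + 1) (by omega)
          (fun k hk1 hk2 => inv_ne_zero (Real.sqrt_pos.2 (hspos k (by omega) (by omega))).ne'),
          hlast]
      rw [hEprod]
      ring
    rw [hVal] at hBig
    exact Filter.Tendsto.congr' hEq.symm hBig
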